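/- arXiv:2108.02151 — 3 statements merged into one kernel-verified Lean document; each statement's English description precedes it below -/
import Mathlib

section
/- Let X be a real random variable such that t ↦ ℙ(|X| ≤ t) is strictly increasing on (0, ∞), let 0 < v₀ < 1 and r ∈ (0,1). For each k ≥ 1, suppose η_k has law equal to the mixture assigning weight r^k to the law of X and weight 1 − r^k to the law of √v₀ · X. Then for every ε > 0, ℙ(|η_k| ≤ ε) < ℙ(|η_{k+1}| ≤ ε). -/
/-!
Shrinking `X` by `√v₀ < 1` strictly increases its mass on `[-ε, ε]`, because that mass is
`ℙ(|X| ≤ ε / √v₀)` and the cdf of `|X|` is strictly increasing. The mass of `η_k` on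
`[-ε, ε]` is the convex combination of these two masses with slab weight `r^k`, and `r^k`
strictly decreases in `k`, so weight moves onto the larger of the two.
-/

open MeasureTheory
open scoped ENNReal

theorem abs_const_mul_le_iff_abs_le_div {c x ε : ℝ} (hc : 0 < c) :
    |c * x| ≤ ε ↔ |x| ≤ ε / c := by
  rw [abs_mul, abs_of_pos hc, le_div_iff₀ hc, mul_comm]

theorem map_const_mul_abs_le {Ω : Type*} [MeasurableSpace Ω] (μ : Measure Ω)
    {X : Ω → ℝ} (hX : Measurable X) {c : ℝ} (hc : 0 < c) (ε : ℝ) :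
    μ.map (fun ω => c * X ω) {x | |x| ≤ ε} = μ {ω | |X ω| ≤ ε / c} := by
  rw [Measure.map_apply (hX.const_mul c) (measurableSet_le measurable_abs measurable_const)]
  simp only [Set.preimage_ofPred_eq, abs_const_mul_le_iff_abs_le_div hc]

theorem ENNReal.mixture_lt_mixture_of_lt {a b : ℝ≥0∞} (hab : a < b) (hb : b ≠ ∞)
    {p q : ℝ} (hq : 0 ≤ q) (hqp : q < p) (hp : p ≤ 1) :
    ENNReal.ofReal p * a + ENNReal.ofReal (1 - p) * b
      < ENNReal.ofReal q * a + ENNReal.ofReal (1 - q) * b := by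
  have ha : a ≠ ∞ := ne_top_of_lt hab
  have hfin (t : ℝ) : ENNReal.ofReal t * a + ENNReal.ofReal (1 - t) * b ≠ ∞ := by finiteness
  rw [← ENNReal.toReal_lt_toReal (hfin p) (hfin q)]
  have hab' : a.toReal < b.toReal := (ENNReal.toReal_lt_toReal ha hb).2 hab
  rw [ENNReal.toReal_add (by finiteness) (by finiteness),
    ENNReal.toReal_add (by finiteness) (by finiteness)]
  simp only [ENNReal.toReal_mul,
    ENNReal.toReal_ofReal (hq.trans hqp.le), ENNReal.toReal_ofReal hq,
    ENNReal.toReal_ofReal (sub_nonneg.2 hp), ENNReal.toReal_ofReal (by linarith : 0 ≤ 1 - q)]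
  nlinarith

theorem nmig_ordered_shrinkage_general
    {Ω Ω' : Type*} [MeasurableSpace Ω] [MeasurableSpace Ω']
    (μ : Measure Ω) (μ' : Measure Ω')
    [IsProbabilityMeasure μ]
    (X : Ω → ℝ) (hX : Measurable X)
    (hmono : StrictMonoOn (fun t : ℝ => μ {ω | |X ω| ≤ t}) (Set.Ioi (0 : ℝ)))
    (v₀ : ℝ) (hv0 : 0 < v₀) (hv1 : v₀ < 1)
    (r : ℝ) (hr0 : 0 < r) (hr1 : r < 1)
    (η : ℕ → Ω' → ℝ) (hη : ∀ k, Measurable (η k))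
    (hlaw : ∀ k, 1 ≤ k → Measure.map (η k) μ'
        = ENNReal.ofReal (r ^ k) • Measure.map X μ
          + ENNReal.ofReal (1 - r ^ k) • Measure.map (fun ω => Real.sqrt v₀ * X ω) μ) :
    ∀ ε : ℝ, 0 < ε → ∀ k, 1 ≤ k →
      μ' {ω | |η k ω| ≤ ε} < μ' {ω | |η (k + 1) ω| ≤ ε} := by
  intro ε hε k hk
  have hsqrt : 0 < Real.sqrt v₀ := Real.sqrt_pos.2 hv0
  have hS : MeasurableSet {x : ℝ | |x| ≤ ε} := measurableSet_le measurable_abs measurable_const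
  have hmass (m : ℕ) (hm : 1 ≤ m) : μ' {ω | |η m ω| ≤ ε}
      = ENNReal.ofReal (r ^ m) * μ {ω | |X ω| ≤ ε}
        + ENNReal.ofReal (1 - r ^ m) * μ {ω | |X ω| ≤ ε / Real.sqrt v₀} := by
    calc μ' {ω | |η m ω| ≤ ε}
        = μ'.map (η m) {x | |x| ≤ ε} := (Measure.map_apply (hη m) hS).symm
      _ = _ := by
        rw [hlaw m hm, Measure.add_apply, Measure.smul_apply, Measure.smul_apply,
          Measure.map_apply hX hS, map_const_mul_abs_le μ hX hsqrt]
        rfl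
  have hshrink : ε < ε / Real.sqrt v₀ :=
    (lt_div_iff₀ hsqrt).2 <|
      mul_lt_of_lt_one_right hε ((Real.sqrt_lt' one_pos).2 (by simpa using hv1))
  rw [hmass k hk, hmass (k + 1) (by omega)]
  exact ENNReal.mixture_lt_mixture_of_lt (hmono hε (hε.trans hshrink) hshrink)
    (measure_ne_top μ _) (pow_pos hr0 _).le (pow_lt_pow_right_of_lt_one₀ hr0 hr1 k.lt_succ_self)
    (pow_le_one₀ hr0.le hr1.le)

/-- Corollary 4: let `X` be a real random variable whose absolute-value cdf
`t ↦ ℙ(|X| ≤ t)` is strictly increasing on `(0,∞)`, let `0 < v₀ < 1` and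
`r ∈ (0,1)`. If each `η_k` has law the mixture assigning weight `r^k` to the law of
`X` and weight `1 − r^k` to the law of `√v₀ · X`, then the mass of `η_k` near zero
is strictly increasing in `k`. -/
theorem nmig_ordered_shrinkage
    {Ω Ω' : Type*} [MeasurableSpace Ω] [MeasurableSpace Ω']
    (μ : Measure Ω) (μ' : Measure Ω')
    [IsProbabilityMeasure μ] [IsProbabilityMeasure μ']
    (X : Ω → ℝ) (hX : Measurable X)
    (hmono : StrictMonoOn (fun t : ℝ => μ {ω | |X ω| ≤ t}) (Set.Ioi (0 : ℝ)))
    (v₀ : ℝ) (hv0 : 0 < v₀) (hv1 : v₀ < 1)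
    (r : ℝ) (hr0 : 0 < r) (hr1 : r < 1)
    (η : ℕ → Ω' → ℝ) (hη : ∀ k, Measurable (η k))
    (hlaw : ∀ k, 1 ≤ k → Measure.map (η k) μ'
        = ENNReal.ofReal (r ^ k) • Measure.map X μ
          + ENNReal.ofReal (1 - r ^ k) • Measure.map (fun ω => Real.sqrt v₀ * X ω) μ) :
    ∀ ε : ℝ, 0 < ε → ∀ k, 1 ≤ k →
      μ' {ω | |η k ω| ≤ ε} < μ' {ω | |η (k + 1) ω| ≤ ε} :=
  nmig_ordered_shrinkage_general μ μ' X hX hmono v₀ hv0 hv1 r hr0 hr1 η hη hlaw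
end

section
/- For every real t with 0 < t < 1, (2/π) · arctan(t) > 1 − 1/(1 + t²). -/
/-! Since `arctan` is concave on `[0, ∞)`, it lies above its chord from `0` to `1`, so
`(2/π) arctan t ≥ t/2` on `[0, 1]`; and `t/2 > t²/(1 + t²) = 1 - 1/(1 + t²)` because
`1 + t² > 2t` for `t ≠ 1`. -/

open Real Set

theorem Real.concaveOn_arctan_Ici : ConcaveOn ℝ (Ici 0) arctan := by
  refine AntitoneOn.concaveOn_of_deriv (convex_Ici 0) continuous_arctan.continuousOn
    differentiable_arctan.differentiableOn ?_
  intro x hx y hy hxy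
  rw [interior_Ici, mem_Ioi] at hx hy
  simp only [deriv_arctan]
  gcongr

theorem Real.pi_div_four_mul_le_arctan {t : ℝ} (ht0 : 0 ≤ t) (ht1 : t ≤ 1) :
    π / 4 * t ≤ arctan t := by
  have := concaveOn_arctan_Ici.2 (mem_Ici.2 le_rfl) (mem_Ici.2 zero_le_one)
    (sub_nonneg.2 ht1) ht0 (by ring)
  simpa [arctan_one, mul_comm] using this

/-- Key analytic inequality in the proof of Lemma 4: for `0 < t < 1`,
`(2/π) arctan t > 1 − 1/(1 + t²)`. -/
theorem arctan_lower_bound (t : ℝ) (ht0 : 0 < t) (ht1 : t < 1) :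
    (2 / Real.pi) * Real.arctan t > 1 - 1 / (1 + t ^ 2) := by
  have h_chord : t / 2 ≤ (2 / π) * arctan t := by
    have := pi_div_four_mul_le_arctan ht0.le ht1.le
    rw [div_mul_eq_mul_div, le_div_iff₀ pi_pos]
    linarith
  have h_square : 1 - 1 / (1 + t ^ 2) < t / 2 := by
    have hpos : 0 < 1 + t ^ 2 := by positivity
    rw [one_sub_div hpos.ne', div_lt_div_iff₀ hpos two_pos]
    nlinarith [mul_pos ht0 (pow_pos (sub_pos.2 ht1) 2)]
  linarith
end

section
/- Let η, η′ and ξ be real random variables on a common probability space such that ξ is independent of the pair (η, η′) and ℙ(ξ = 0) = 0. If ℙ(|η| ≤ δ) < ℙ(|η′| ≤ δ) for every δ > 0, then ℙ(|η · ξ| ≤ ε) < ℙ(|η′ · ξ| ≤ ε) for every ε > 0. -/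
/-!
Conditioning on `ξ`, which is independent of `(η, η′)`, writes `ℙ(|η ξ| ≤ ε)` as the average over
`x ~ ξ` of `ℙ(|η| ≤ ε / |x|)`, and likewise for `η′`. Since `ξ ≠ 0` almost surely, the integrands
compare strictly almost everywhere, and a strict a.e. inequality survives integration against a
nonzero finite measure.
-/

open MeasureTheory ProbabilityTheory

namespace ProbabilityTheory.IndepFun

variable {Ω α β : Type*} [MeasurableSpace Ω] [MeasurableSpace α] [MeasurableSpace β]
  {μ : Measure Ω} {X : Ω → α} {Y : Ω → β}

theorem measure_preimage_eq_lintegral [IsFiniteMeasure μ] (hXY : IndepFun X Y μ)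
    (hX : Measurable X) (hY : Measurable Y) {S : Set (α × β)} (hS : MeasurableSet S) :
    μ ((fun ω => (X ω, Y ω)) ⁻¹' S) = ∫⁻ ω, μ.map Y (Prod.mk (X ω) ⁻¹' S) ∂μ := by
  rw [← Measure.map_apply (hX.prodMk hY) hS,
    (indepFun_iff_map_prod_eq_prod_map_map hX.aemeasurable hY.aemeasurable).mp hXY,
    Measure.prod_apply hS, lintegral_map (measurable_measure_prodMk_left hS) hX]

theorem measure_preimage_lt [IsFiniteMeasure μ] [NeZero μ] (hXY : IndepFun X Y μ)
    (hX : Measurable X) (hY : Measurable Y) {S T : Set (α × β)} (hS : MeasurableSet S)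
    (hT : MeasurableSet T)
    (hST : ∀ᵐ ω ∂μ, μ.map Y (Prod.mk (X ω) ⁻¹' S) < μ.map Y (Prod.mk (X ω) ⁻¹' T)) :
    μ ((fun ω => (X ω, Y ω)) ⁻¹' S) < μ ((fun ω => (X ω, Y ω)) ⁻¹' T) := by
  have hS_finite := measure_ne_top μ ((fun ω => (X ω, Y ω)) ⁻¹' S)
  rw [hXY.measure_preimage_eq_lintegral hX hY hS] at hS_finite ⊢
  rw [hXY.measure_preimage_eq_lintegral hX hY hT]
  exact lintegral_strict_mono (NeZero.ne μ)
    ((measurable_measure_prodMk_left hT).comp hX).aemeasurable hS_finite hST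

end ProbabilityTheory.IndepFun

theorem abs_mul_le_iff_abs_le_div_abs {a x ε : ℝ} (hx : x ≠ 0) :
    |a * x| ≤ ε ↔ |a| ≤ ε / |x| := by
  rw [abs_mul, le_div_iff₀ (abs_pos.mpr hx)]

/-- Proposition 3 (parameter expansion preserves the ordering): if `ξ` is independent
of the pair `(η, η′)`, has no atom at `0`, and `ℙ(|η| ≤ δ) < ℙ(|η′| ≤ δ)` for every
`δ > 0`, then `ℙ(|η ξ| ≤ ε) < ℙ(|η′ ξ| ≤ ε)` for every `ε > 0`. -/
theorem product_ordered_shrinkage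
    {Ω : Type*} [MeasurableSpace Ω] (μ : Measure Ω) [IsProbabilityMeasure μ]
    (η η' ξ : Ω → ℝ) (hη : Measurable η) (hη' : Measurable η') (hξ : Measurable ξ)
    (hindep : IndepFun ξ (fun ω => (η ω, η' ω)) μ)
    (h0 : μ {ω | ξ ω = 0} = 0)
    (hlt : ∀ δ : ℝ, 0 < δ → μ {ω | |η ω| ≤ δ} < μ {ω | |η' ω| ≤ δ}) :
    ∀ ε : ℝ, 0 < ε →
      μ {ω | |η ω * ξ ω| ≤ ε} < μ {ω | |η' ω * ξ ω| ≤ ε} := by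
  intro ε hε
  have hpair : Measurable fun ω => (η ω, η' ω) := hη.prodMk hη'
  refine hindep.measure_preimage_lt (S := {q | |q.2.1 * q.1| ≤ ε})
    (T := {q | |q.2.2 * q.1| ≤ ε}) hξ hpair
    (measurableSet_le (by fun_prop) measurable_const)
    (measurableSet_le (by fun_prop) measurable_const) ?_
  filter_upwards [measure_eq_zero_iff_ae_notMem.mp h0] with ω (hω : ξ ω ≠ 0)
  simp only [Set.preimage_ofPred_eq, abs_mul_le_iff_abs_le_div_abs hω]
  rw [Measure.map_apply hpair (measurableSet_le (by fun_prop) measurable_const),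
    Measure.map_apply hpair (measurableSet_le (by fun_prop) measurable_const)]
  exact hlt _ (div_pos hε (abs_pos.mpr hω))
end
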